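/- arXiv:1602.08796 — 5 statements merged into one kernel-verified Lean document; each statement's English description precedes it below -/
import Mathlib

section
/- For all t ≥ s > 0 and x, y ∈ ℝ, E[(u(t,x) - u(s,y))²] = (1/√(2π)) (√(2(t-s)) + Δ(s,t,x-y)), where Δ(s,t,z) = ∫₀^s ( (2(t-r))^{-1/2} - 2(t+s-2r)^{-1/2} exp(-z²/(2(t+s-2r))) + (2(s-r))^{-1/2} ) dr. -/
/-
On the diagonal the covariance integrand is `(2(τ - r))^{-1/2}`, independent of the space
point. Splitting the `t`-diagonal integral at `s`, its piece over `(s, t]` evaluates to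
`√(2(t - s))`, and the three remaining integrals over `(0, s]` recombine, by linearity,
into `Δ(s, t, x - y)`.
-/

open MeasureTheory Real

/-- Covariance `R t x s y = E[u(t,x)u(s,y)]` of the stochastic heat equation solution. -/
noncomputable def heatCov (t x s y : ℝ) : ℝ :=
  (Real.sqrt (2 * π))⁻¹ *
    ∫ r in Set.Ioc (0 : ℝ) (min s t),
      (Real.sqrt (t + s - 2 * r))⁻¹ * Real.exp (-(x - y) ^ 2 / (2 * (t + s - 2 * r)))

/-- The function `Δ(s,t,z)`. -/
noncomputable def heatDelta (s t z : ℝ) : ℝ :=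
  ∫ r in Set.Ioc (0 : ℝ) s,
    ((Real.sqrt (2 * (t - r)))⁻¹
      - 2 * (Real.sqrt (t + s - 2 * r))⁻¹ * Real.exp (-z ^ 2 / (2 * (t + s - 2 * r)))
      + (Real.sqrt (2 * (s - r)))⁻¹)

lemma Real.inv_sqrt_eq_rpow_neg_half (u : ℝ) : (√u)⁻¹ = u ^ (-(1 / 2) : ℝ) := by
  rcases le_or_gt 0 u with hu | hu
  · rw [Real.rpow_neg hu, Real.sqrt_eq_rpow]
  · rw [Real.sqrt_eq_zero_of_nonpos hu.le, inv_zero, Real.rpow_def_of_neg hu,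
      show (-(1 / 2) : ℝ) * π = -(π / 2) by ring, Real.cos_neg, Real.cos_pi_div_two, mul_zero]

lemma intervalIntegrable_inv_sqrt_two_mul_sub (τ a b : ℝ) :
    IntervalIntegrable (fun r => (√(2 * (τ - r)))⁻¹) volume a b := by
  have h := ((intervalIntegral.intervalIntegrable_rpow' (r := -(1 / 2)) (by norm_num)
    (a := 2 * (τ - a)) (b := 2 * (τ - b))).comp_mul_left (c := 2)).comp_sub_left τ
  rw [show τ - 2 * (τ - a) / 2 = a by ring, show τ - 2 * (τ - b) / 2 = b by ring] at h
  refine h.congr fun r _ => ?_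
  simp only [Real.inv_sqrt_eq_rpow_neg_half]

lemma integrableOn_inv_sqrt_two_mul_sub (τ a b : ℝ) :
    IntegrableOn (fun r => (√(2 * (τ - r)))⁻¹) (Set.Ioc a b) :=
  (intervalIntegrable_inv_sqrt_two_mul_sub τ a b).1

lemma integral_inv_sqrt_two_mul_sub {s t : ℝ} (hst : s ≤ t) :
    ∫ r in Set.Ioc s t, (√(2 * (t - r)))⁻¹ = √(2 * (t - s)) := by
  rw [← intervalIntegral.integral_of_le hst,
    intervalIntegral.integral_comp_sub_left (fun u => (√(2 * u))⁻¹) t, sub_self]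
  simp only [Real.inv_sqrt_eq_rpow_neg_half]
  rw [intervalIntegral.integral_comp_mul_left (fun v => v ^ (-(1 / 2) : ℝ)) two_ne_zero, mul_zero,
    integral_rpow (Or.inl (by norm_num)), show (-(1 / 2) : ℝ) + 1 = 1 / 2 by norm_num,
    Real.zero_rpow (by norm_num), Real.sqrt_eq_rpow, smul_eq_mul]
  ring

lemma integrableOn_heatCov_integrand (t s z a b : ℝ) :
    IntegrableOn (fun r => (√(t + s - 2 * r))⁻¹ * exp (-z ^ 2 / (2 * (t + s - 2 * r))))
      (Set.Ioc a b) := by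
  refine (integrableOn_inv_sqrt_two_mul_sub ((t + s) / 2) a b).mono' ?_ ?_
  · fun_prop
  · refine ae_of_all _ fun r => ?_
    rw [show 2 * ((t + s) / 2 - r) = t + s - 2 * r by ring, norm_mul, Real.norm_of_nonneg
      (inv_nonneg.2 (Real.sqrt_nonneg _)), Real.norm_of_nonneg (exp_nonneg _)]
    -- where `t + s - 2r ≤ 0` the exponential may be large, but the junk value `√ = 0` kills it
    rcases le_or_gt (t + s - 2 * r) 0 with hd | hd
    · simp [Real.sqrt_eq_zero_of_nonpos hd]
    · refine mul_le_of_le_one_right (inv_nonneg.2 (Real.sqrt_nonneg _)) ?_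
      exact exp_le_one_iff.2 (div_nonpos_of_nonpos_of_nonneg (by nlinarith) (by linarith))

lemma heatCov_self (τ w : ℝ) :
    heatCov τ w τ w = (√(2 * π))⁻¹ * ∫ r in Set.Ioc (0 : ℝ) τ, (√(2 * (τ - r)))⁻¹ := by
  unfold heatCov
  rw [min_self]
  congr 1
  refine setIntegral_congr_fun measurableSet_Ioc fun r _ => ?_
  simp [show τ + τ - 2 * r = 2 * (τ - r) by ring]

lemma heatDelta_eq (s t z : ℝ) :
    heatDelta s t z = (∫ r in Set.Ioc (0 : ℝ) s, (√(2 * (t - r)))⁻¹)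
      - 2 * (∫ r in Set.Ioc (0 : ℝ) s,
          (√(t + s - 2 * r))⁻¹ * exp (-z ^ 2 / (2 * (t + s - 2 * r))))
      + ∫ r in Set.Ioc (0 : ℝ) s, (√(2 * (s - r)))⁻¹ := by
  have hsingular := integrableOn_inv_sqrt_two_mul_sub t 0 s
  have hcross := (integrableOn_heatCov_integrand t s z 0 s).const_mul 2
  simp only [← mul_assoc] at hcross
  rw [heatDelta, integral_add ?_ (integrableOn_inv_sqrt_two_mul_sub s 0 s),
    integral_sub hsingular hcross, ← integral_const_mul]
  · simp only [mul_assoc]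
  · exact hsingular.sub hcross

/-- `E[(u(t,x) - u(s,y))²] = (1/√(2π)) (√(2(t-s)) + Δ(s,t,x-y))`, written via the covariance:
`E[(u(t,x)-u(s,y))²] = R(t,x,t,x) - 2R(t,x,s,y) + R(s,y,s,y)`. -/
theorem stmt_1 (t s x y : ℝ) (hs : 0 < s) (hts : s ≤ t) :
    heatCov t x t x - 2 * heatCov t x s y + heatCov s y s y =
      (Real.sqrt (2 * π))⁻¹ * (Real.sqrt (2 * (t - s)) + heatDelta s t (x - y)) := by
  have hsplit : ∫ r in Set.Ioc (0 : ℝ) t, (√(2 * (t - r)))⁻¹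
      = (∫ r in Set.Ioc (0 : ℝ) s, (√(2 * (t - r)))⁻¹) + √(2 * (t - s)) := by
    rw [← Set.Ioc_union_Ioc_eq_Ioc hs.le hts,
      setIntegral_union (Set.Ioc_disjoint_Ioc_of_le le_rfl) measurableSet_Ioc
        (integrableOn_inv_sqrt_two_mul_sub t 0 s) (integrableOn_inv_sqrt_two_mul_sub t s t),
      integral_inv_sqrt_two_mul_sub hts]
  rw [heatCov_self, heatCov_self, hsplit, heatDelta_eq, heatCov, min_eq_left hts]
  ring
end

section
/- For all t > 0 and reals x > y > x' > y', |E[(u(t,x) - u(t,y))(u(t,x') - u(t,y'))]| ≤ (1/(4√(tπ))) (x-y)(x'-y') e^{-(y-x')²/(4t)}. -/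
/-!
Differentiating `f(w) = w ∫_w^∞ s⁻² e^{-s²/(4t)} ds` twice on `w > 0` gives
`f'(w) = ∫_w^∞ s⁻² e^{-s²/(4t)} ds - e^{-w²/(4t)}/w` and `f''(w) = e^{-w²/(4t)}/(2t)`.
Two applications of the mean value theorem write the mixed second difference
`f(x-x') - f(x-y') - f(y-x') + f(y-y')` as `-(x-y)(x'-y') f''(ξ)` with `ξ > y - x' > 0`,
and the Gaussian is decreasing on `[0, ∞)`.
-/

open MeasureTheory Real

/-- `f(w) = w ∫_w^∞ s^{-2} e^{-s²/(4t)} ds` for a fixed `t > 0`. -/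
noncomputable def fAux (t w : ℝ) : ℝ :=
  w * ∫ s in Set.Ioi w, (s ^ 2)⁻¹ * Real.exp (-s ^ 2 / (4 * t))

open Set

theorem hasDerivAt_integral_Ioi {E : Type*} [NormedAddCommGroup E] [NormedSpace ℝ E]
    [CompleteSpace E] {f : ℝ → E} {a w : ℝ} (hf : IntegrableOn f (Ioi a)) (haw : a < w)
    (hcont : ContinuousAt f w) :
    HasDerivAt (fun v => ∫ s in Ioi v, f s) (-f w) w := by
  have hFTC : HasDerivAt (fun v => ∫ s in a..v, f s) (f w) w :=
    intervalIntegral.integral_hasDerivAt_right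
      ((intervalIntegrable_iff_integrableOn_Ioc_of_le haw.le).2
        (hf.mono_set Ioc_subset_Ioi_self))
      (AEStronglyMeasurable.stronglyMeasurableAtFilter_of_mem hf.aestronglyMeasurable
        (Ioi_mem_nhds haw)) hcont
  refine ((hasDerivAt_const w (∫ s in Ioi a, f s)).sub hFTC).congr_deriv (zero_sub _)
    |>.congr_of_eventuallyEq ?_
  filter_upwards [Ioi_mem_nhds haw] with v hv
  rw [Pi.sub_apply, ← intervalIntegral.integral_Ioi_sub_Ioi hf hv.le, sub_sub_cancel]

theorem exists_second_difference_eq {F F' F'' : ℝ → ℝ}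
    (hF : ∀ w > 0, HasDerivAt F (F' w) w) (hF' : ∀ w > 0, HasDerivAt F' (F'' w) w)
    {x y x' y' : ℝ} (h1 : y' < x') (h2 : x' < y) (h3 : y < x) :
    ∃ ξ ∈ Ioo (y - x') (x - y'),
      F (x - x') - F (x - y') - F (y - x') + F (y - y') = -((x - y) * (x' - y')) * F'' ξ := by
  have hφ : ∀ a > x',
      HasDerivAt (fun a => F (a - x') - F (a - y')) (F' (a - x') - F' (a - y')) a := fun a ha =>
    ((hF _ (by linarith)).comp_sub_const a x').sub ((hF _ (by linarith)).comp_sub_const a y')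
  obtain ⟨c, hc, hφc⟩ := exists_hasDerivAt_eq_slope _ _ h3
    (fun a ha => (hφ a (h2.trans_le ha.1)).continuousAt.continuousWithinAt)
    (fun a ha => hφ a (h2.trans ha.1))
  have hlt : c - x' < c - y' := by linarith
  obtain ⟨ξ, hξ, hF'ξ⟩ := exists_hasDerivAt_eq_slope F' F'' hlt
    (fun w hw => (hF' w (by linarith [hw.1, hc.1])).continuousAt.continuousWithinAt)
    (fun w hw => hF' w (by linarith [hw.1, hc.1]))
  refine ⟨ξ, ⟨by linarith [hξ.1, hc.1], by linarith [hξ.2, hc.2]⟩, ?_⟩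
  rw [eq_div_iff (by linarith)] at hφc hF'ξ
  linear_combination -hφc + (x - y) * hF'ξ

theorem exp_neg_sq_div_le_one {t : ℝ} (ht : 0 ≤ t) (s : ℝ) : exp (-s ^ 2 / (4 * t)) ≤ 1 :=
  exp_le_one_iff.2 (div_nonpos_of_nonpos_of_nonneg (by nlinarith) (by positivity))

theorem hasDerivAt_exp_neg_sq_div {t : ℝ} (ht : 0 < t) (s : ℝ) :
    HasDerivAt (fun s => exp (-s ^ 2 / (4 * t))) (-(s / (2 * t)) * exp (-s ^ 2 / (4 * t))) s := by
  have h : HasDerivAt (fun s => -s ^ 2 / (4 * t)) (-(2 * s) / (4 * t)) s := by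
    simpa using (hasDerivAt_pow 2 s).neg.div_const (4 * t)
  convert h.exp using 1
  field_simp
  ring

theorem integrableOn_Ioi_inv_sq_mul_exp {t w : ℝ} (ht : 0 ≤ t) (hw : 0 < w) :
    IntegrableOn (fun s => (s ^ 2)⁻¹ * exp (-s ^ 2 / (4 * t))) (Ioi w) := by
  refine (integrableOn_Ioi_rpow_of_lt (by norm_num : (-2 : ℝ) < -1) hw).mono' ?_ ?_
  · exact (by fun_prop : Measurable fun s : ℝ => (s ^ 2)⁻¹ * exp (-s ^ 2 / (4 * t)))
      |>.aestronglyMeasurable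
  · filter_upwards [ae_restrict_mem measurableSet_Ioi] with s hs
    have hs0 : 0 < s := hw.trans hs
    rw [norm_mul, norm_inv, norm_pow, norm_of_nonneg hs0.le, norm_of_nonneg (exp_pos _).le,
      rpow_neg hs0.le, show (2 : ℝ) = (2 : ℕ) by norm_num, rpow_natCast]
    exact mul_le_of_le_one_right (by positivity) (exp_neg_sq_div_le_one ht s)

theorem continuousAt_inv_sq_mul_exp (t : ℝ) {w : ℝ} (hw : w ≠ 0) :
    ContinuousAt (fun s => (s ^ 2)⁻¹ * exp (-s ^ 2 / (4 * t))) w := by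
  fun_prop (disch := positivity)

theorem hasDerivAt_integral_Ioi_inv_sq_mul_exp {t w : ℝ} (ht : 0 ≤ t) (hw : 0 < w) :
    HasDerivAt (fun v => ∫ s in Ioi v, (s ^ 2)⁻¹ * exp (-s ^ 2 / (4 * t)))
      (-((w ^ 2)⁻¹ * exp (-w ^ 2 / (4 * t)))) w :=
  hasDerivAt_integral_Ioi (integrableOn_Ioi_inv_sq_mul_exp ht (half_pos hw)) (half_lt_self hw)
    (continuousAt_inv_sq_mul_exp t hw.ne')

noncomputable def fAuxDeriv (t w : ℝ) : ℝ :=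
  (∫ s in Ioi w, (s ^ 2)⁻¹ * exp (-s ^ 2 / (4 * t))) - exp (-w ^ 2 / (4 * t)) / w

theorem hasDerivAt_fAux {t w : ℝ} (ht : 0 ≤ t) (hw : 0 < w) :
    HasDerivAt (fAux t) (fAuxDeriv t w) w := by
  refine ((hasDerivAt_id' w).mul (hasDerivAt_integral_Ioi_inv_sq_mul_exp ht hw)).congr_deriv ?_
  rw [fAuxDeriv]
  field_simp
  ring

theorem hasDerivAt_fAuxDeriv {t w : ℝ} (ht : 0 < t) (hw : 0 < w) :
    HasDerivAt (fAuxDeriv t) (exp (-w ^ 2 / (4 * t)) / (2 * t)) w := by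
  refine ((hasDerivAt_integral_Ioi_inv_sq_mul_exp ht.le hw).sub
    ((hasDerivAt_exp_neg_sq_div ht w).div (hasDerivAt_id' w) hw.ne')).congr_deriv ?_
  field_simp
  ring

theorem sqrt_div_two_sqrt_pi_div_two_mul {t : ℝ} (ht : 0 < t) :
    √t / (2 * √π) / (2 * t) = (4 * √(t * π))⁻¹ := by
  have := sqrt_pos.2 ht
  have := sqrt_pos.2 pi_pos
  rw [sqrt_mul ht.le]
  field_simp
  rw [sq_sqrt ht.le]
  ring

/-- For all `t > 0` and reals `x > y > x' > y'`,
`|E[(u(t,x)-u(t,y))(u(t,x')-u(t,y'))]| ≤ (1/(4√(tπ)))(x-y)(x'-y')e^{-(y-x')²/(4t)}`, where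
the spatial covariance is `R_{a,b}(t,t) = (√t/(2√π)) f(|a-b|)`. -/
theorem stmt_10 (t x y x' y' : ℝ) (ht : 0 < t) (h1 : y' < x') (h2 : x' < y) (h3 : y < x) :
    |(Real.sqrt t / (2 * Real.sqrt π)) *
        (fAux t (x - x') - fAux t (x - y') - fAux t (y - x') + fAux t (y - y'))| ≤
      (4 * Real.sqrt (t * π))⁻¹ * ((x - y) * (x' - y')) * Real.exp (-(y - x') ^ 2 / (4 * t)) := by
  obtain ⟨ξ, hξ, hdiff⟩ := exists_second_difference_eq (fun w hw => hasDerivAt_fAux ht.le hw)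
    (fun w hw => hasDerivAt_fAuxDeriv ht hw) h1 h2 h3
  have hxy : 0 < x - y := by linarith
  have hxy' : 0 < x' - y' := by linarith
  have hexpr : √t / (2 * √π) * (-((x - y) * (x' - y')) * (exp (-ξ ^ 2 / (4 * t)) / (2 * t))) =
      -((4 * √(t * π))⁻¹ * ((x - y) * (x' - y')) * exp (-ξ ^ 2 / (4 * t))) := by
    rw [← sqrt_div_two_sqrt_pi_div_two_mul ht]
    ring
  rw [hdiff, hexpr, abs_neg, abs_of_nonneg (by positivity)]
  gcongr
  exact hξ.1.le
end

section
/- Let σ_t² = √(t/π) and μ_{t,s} = (1/√(2π))(√(t+s) - √(t-s)) for t > s > 0. Then (1/π)√(s(t-s)) ≤ σ_t² σ_s² - μ_{t,s}² ≤ (3/π)√(s(t-s)). -/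
open Real

lemma core_aux (t s : ℝ) (hs : 0 < s) (hst : s < t) :
    Real.sqrt (s * (t - s)) ≤ Real.sqrt (t * s) + Real.sqrt ((t + s) * (t - s)) - t ∧
    Real.sqrt (t * s) + Real.sqrt ((t + s) * (t - s)) - t ≤ 3 * Real.sqrt (s * (t - s)) := by
  have ht : (0:ℝ) < t := hs.trans hst
  have hts : (0:ℝ) < t - s := by linarith
  set a := Real.sqrt t with ha
  set b := Real.sqrt s with hb
  set c := Real.sqrt (t - s) with hc
  set d := Real.sqrt (t + s) with hd
  have ha2 : a ^ 2 = t := Real.sq_sqrt ht.le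
  have hb2 : b ^ 2 = s := Real.sq_sqrt hs.le
  have hc2 : c ^ 2 = t - s := Real.sq_sqrt hts.le
  have hd2 : d ^ 2 = t + s := Real.sq_sqrt (by linarith)
  have ha0 : 0 ≤ a := Real.sqrt_nonneg _
  have hb0 : 0 ≤ b := Real.sqrt_nonneg _
  have hc0 : 0 ≤ c := Real.sqrt_nonneg _
  have hd0 : 0 ≤ d := Real.sqrt_nonneg _
  have e1 : Real.sqrt (t * s) = a * b := Real.sqrt_mul ht.le s
  have e2 : Real.sqrt ((t + s) * (t - s)) = d * c := Real.sqrt_mul (by linarith) _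
  have e3 : Real.sqrt (s * (t - s)) = b * c := Real.sqrt_mul hs.le _
  have hac : c ≤ a := by
    rw [ha, hc]; exact Real.sqrt_le_sqrt (by linarith)
  have had : a ≤ d := by
    rw [ha, hd]; exact Real.sqrt_le_sqrt (by linarith)
  have hdab : d ≤ a + b := by
    have h := Real.sqrt_le_sqrt (show t + s ≤ (a + b) ^ 2 by nlinarith)
    rwa [Real.sqrt_sq (by positivity)] at h
  have hba : b ≤ a := by
    rw [ha, hb]; exact Real.sqrt_le_sqrt hst.le
  clear_value a b c d
  constructor
  · rw [e1, e2, e3]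
    -- certificate: (dc)² - (a² - b(a-c))² = 2ab(a-c)(a-b) ≥ 0
    have hd2' : d ^ 2 = a ^ 2 + b ^ 2 := by rw [ha2, hb2, hd2]
    have hc2' : c ^ 2 = a ^ 2 - b ^ 2 := by rw [ha2, hb2, hc2]
    have h5 : d ^ 2 * c ^ 2 - (a ^ 2 - b * (a - c)) ^ 2 = 2 * a * b * (a - c) * (a - b) := by
      linear_combination c ^ 2 * hd2' + a ^ 2 * hc2'
    have hN : 0 ≤ 2 * a * b * (a - c) * (a - b) := by
      have := sub_nonneg.mpr hac; have := sub_nonneg.mpr hba; positivity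
    rw [← ha2]
    nlinarith [h5, hN, mul_nonneg hd0 hc0, sq_nonneg (d * c - (a ^ 2 - b * (a - c)))]
  · rw [e1, e2, e3]
    -- key: a*(b+c) ≤ a^2 + 2*b*c
    have hkey : a * (b + c) ≤ a ^ 2 + 2 * b * c := by
      nlinarith [sq_nonneg (a * (b + c) - (a ^ 2 + 2 * b * c)), sq_nonneg (b + c),
        mul_nonneg hb0 hc0, sq_nonneg (a - b - c), sq_nonneg (b*c)]
    nlinarith [mul_nonneg hc0 (sub_nonneg.mpr hdab), mul_nonneg hb0 hc0]

/-- With `σ_t² = √(t/π)` and `μ_{t,s} = (1/√(2π))(√(t+s) - √(t-s))` for `t > s > 0`,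
`(1/π)√(s(t-s)) ≤ σ_t²σ_s² - μ_{t,s}² ≤ (3/π)√(s(t-s))`. -/
theorem stmt_11 (t s : ℝ) (hs : 0 < s) (hst : s < t) :
    (1 / π) * Real.sqrt (s * (t - s)) ≤
        Real.sqrt (t / π) * Real.sqrt (s / π)
          - ((Real.sqrt (2 * π))⁻¹ * (Real.sqrt (t + s) - Real.sqrt (t - s))) ^ 2 ∧
      Real.sqrt (t / π) * Real.sqrt (s / π)
          - ((Real.sqrt (2 * π))⁻¹ * (Real.sqrt (t + s) - Real.sqrt (t - s))) ^ 2 ≤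
        (3 / π) * Real.sqrt (s * (t - s)) := by
  have ht : (0:ℝ) < t := hs.trans hst
  have hts : (0:ℝ) < t - s := by linarith
  have hπ : (0:ℝ) < π := Real.pi_pos
  have h1 : Real.sqrt (t / π) * Real.sqrt (s / π) = Real.sqrt (t * s) / π := by
    rw [← Real.sqrt_mul (by positivity) (s / π)]
    rw [show t / π * (s / π) = (t * s) / π ^ 2 by ring]
    rw [Real.sqrt_div (by positivity) (π ^ 2), Real.sqrt_sq hπ.le]
  have h2 : ((Real.sqrt (2 * π))⁻¹ * (Real.sqrt (t + s) - Real.sqrt (t - s))) ^ 2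
      = (t - Real.sqrt ((t + s) * (t - s))) / π := by
    rw [mul_pow, inv_pow, Real.sq_sqrt (by positivity)]
    rw [sub_sq, Real.sq_sqrt (by linarith), Real.sq_sqrt hts.le, mul_assoc 2,
      ← Real.sqrt_mul (by linarith : (0:ℝ) ≤ t + s)]
    field_simp
    ring
  obtain ⟨hl, hu⟩ := core_aux t s hs hst
  rw [h1, h2]
  constructor
  · rw [div_sub_div_same, show (1:ℝ) / π * Real.sqrt (s * (t - s))
      = Real.sqrt (s * (t - s)) / π by ring]
    gcongr
    linarith
  · rw [div_sub_div_same, show (3:ℝ) / π * Real.sqrt (s * (t - s))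
      = (3 * Real.sqrt (s * (t - s))) / π by ring]
    gcongr
    linarith
end

section
/- For all z ∈ [0,1]: √z + √(1-z²) - 1 ≥ √(z(1-z)) and √z + √(1-z²) - 1 ≤ 3√(z(1-z)). -/
/-- For all `z ∈ [0,1]`: `√(z(1-z)) ≤ √z + √(1-z²) - 1 ≤ 3√(z(1-z))`. -/
theorem stmt_12 (z : ℝ) (h0 : 0 ≤ z) (h1 : z ≤ 1) :
    Real.sqrt (z * (1 - z)) ≤ Real.sqrt z + Real.sqrt (1 - z ^ 2) - 1 ∧
      Real.sqrt z + Real.sqrt (1 - z ^ 2) - 1 ≤ 3 * Real.sqrt (z * (1 - z)) := by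
  set a := Real.sqrt z with ha'
  set b := Real.sqrt (1 - z) with hb'
  set c := Real.sqrt (1 + z) with hc'
  have ha : 0 ≤ a := Real.sqrt_nonneg _
  have hb : 0 ≤ b := Real.sqrt_nonneg _
  have hc : 0 ≤ c := Real.sqrt_nonneg _
  have ha2 : a ^ 2 = z := Real.sq_sqrt h0
  have hb2 : b ^ 2 = 1 - z := Real.sq_sqrt (by linarith)
  have hc2 : c ^ 2 = 1 + z := Real.sq_sqrt (by linarith)
  have hw : Real.sqrt (z * (1 - z)) = a * b := Real.sqrt_mul h0 _
  have hbc : Real.sqrt (1 - z ^ 2) = b * c := by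
    rw [show (1 : ℝ) - z ^ 2 = (1 - z) * (1 + z) by ring, Real.sqrt_mul (by linarith)]
  have hc1 : 1 ≤ c := by nlinarith
  have hcle : c ≤ 2 := by nlinarith
  rw [hw, hbc]
  constructor
  · -- (a + b*c)^2 - (1 + a*b)^2 = 2*a*b*(c-1) ≥ 0 and both sides nonneg
    nlinarith [mul_nonneg (mul_nonneg ha hb) (sub_nonneg.2 hc1),
      mul_nonneg ha hb, mul_nonneg hb hc, sq_nonneg (a + b * c - 1 - a * b)]
  · -- (1 + 3*a*b)^2 - (a + b*c)^2 = 2*a*b*(3-c) + 8*a^2*b^2 ≥ 0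
    nlinarith [mul_nonneg (mul_nonneg ha hb) (by linarith : (0:ℝ) ≤ 3 - c),
      mul_nonneg ha hb, mul_nonneg hb hc, sq_nonneg (a * b),
      sq_nonneg (1 + 3 * a * b - a - b * c)]
end

section
/- For every t > 0 and x ∈ ℝ, lim_{ε→0⁺} (1/ε) E[(u(t,x+ε) - u(t,x))²] = 1. -/
/-!
Substituting `r = ε² u` turns `ε⁻¹ ∫₀^t r^{-1/2} (1 - e^{-ε²/(4r)}) dr` into
`∫₀^{t/ε²} u^{-1/2} (1 - e^{-1/(4u)}) du`, which tends to the integral over `(0, ∞)`.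
The further substitution `u = x⁻²` makes this `2 ∫₀^∞ (1 - e^{-x²/4}) / x² dx`, and
integrating by parts against `-1/x` reduces `∫₀^∞ (1 - e^{-c x²}) / x² dx` to the Gaussian
integral `2c ∫₀^∞ e^{-c x²} dx = √(π c)`. As that integrand is nonnegative, the convergence
of its primitive at `∞` also yields integrability.
-/

open MeasureTheory Real Filter Topology Set

section

variable {c : ℝ}

lemma one_sub_exp_neg_mul_sq_nonneg (hc : 0 ≤ c) (x : ℝ) : 0 ≤ 1 - exp (-c * x ^ 2) := by
  have : exp (-c * x ^ 2) ≤ 1 := exp_le_one_iff.mpr (by nlinarith [sq_nonneg x])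
  linarith

lemma one_sub_exp_neg_mul_sq_le (x : ℝ) : 1 - exp (-c * x ^ 2) ≤ c * x ^ 2 := by
  rw [neg_mul]
  linarith [one_sub_le_exp_neg (c * x ^ 2)]

lemma abs_one_sub_exp_neg_mul_sq_div_le_mul (hc : 0 ≤ c) (x : ℝ) :
    |(1 - exp (-c * x ^ 2)) / x| ≤ c * |x| := by
  rw [abs_div, abs_of_nonneg (one_sub_exp_neg_mul_sq_nonneg hc x)]
  rcases eq_or_ne x 0 with rfl | hx
  · simp
  rw [div_le_iff₀ (abs_pos.mpr hx), mul_assoc, abs_mul_abs_self, ← sq]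
  exact one_sub_exp_neg_mul_sq_le x

lemma abs_one_sub_exp_neg_mul_sq_div_le_inv (hc : 0 ≤ c) (x : ℝ) :
    |(1 - exp (-c * x ^ 2)) / x| ≤ |x|⁻¹ := by
  rw [abs_div, abs_of_nonneg (one_sub_exp_neg_mul_sq_nonneg hc x), div_eq_mul_inv]
  exact mul_le_of_le_one_left (by positivity) (by linarith [exp_pos (-c * x ^ 2)])

lemma tendsto_one_sub_exp_neg_mul_sq_div_nhds_zero (hc : 0 ≤ c) :
    Tendsto (fun x => (1 - exp (-c * x ^ 2)) / x) (𝓝 0) (𝓝 0) := by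
  refine squeeze_zero_norm (abs_one_sub_exp_neg_mul_sq_div_le_mul hc) ?_
  have : Continuous fun x : ℝ => c * |x| := by fun_prop
  simpa using this.tendsto 0

lemma tendsto_one_sub_exp_neg_mul_sq_div_atTop (hc : 0 ≤ c) :
    Tendsto (fun x => (1 - exp (-c * x ^ 2)) / x) atTop (𝓝 0) :=
  squeeze_zero_norm (abs_one_sub_exp_neg_mul_sq_div_le_inv hc)
    (tendsto_inv_atTop_zero.comp tendsto_abs_atTop_atTop)

lemma hasDerivAt_one_sub_exp_neg_mul_sq_div {x : ℝ} (hx : x ≠ 0) :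
    HasDerivAt (fun x => (1 - exp (-c * x ^ 2)) / x)
      (2 * c * exp (-c * x ^ 2) - (1 - exp (-c * x ^ 2)) / x ^ 2) x := by
  refine ((((hasDerivAt_pow 2 x).const_mul (-c)).exp.const_sub 1).div (hasDerivAt_id' x)
    hx).congr_deriv ?_
  field_simp
  ring

noncomputable def oneSubExpDivSqPrimitive (c x : ℝ) : ℝ :=
  2 * c * (∫ s in 0..x, exp (-c * s ^ 2)) - (1 - exp (-c * x ^ 2)) / x

lemma hasDerivAt_oneSubExpDivSqPrimitive {x : ℝ} (hx : x ≠ 0) :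
    HasDerivAt (oneSubExpDivSqPrimitive c) ((1 - exp (-c * x ^ 2)) / x ^ 2) x := by
  have hgauss : Continuous fun s : ℝ => exp (-c * s ^ 2) := by fun_prop
  refine (((hgauss.integral_hasStrictDerivAt 0 x).hasDerivAt.const_mul (2 * c)).sub
    (hasDerivAt_one_sub_exp_neg_mul_sq_div hx)).congr_deriv ?_
  ring

lemma continuousAt_oneSubExpDivSqPrimitive_zero (hc : 0 ≤ c) :
    ContinuousAt (oneSubExpDivSqPrimitive c) 0 := by
  have hgauss : Continuous fun s : ℝ => exp (-c * s ^ 2) := by fun_prop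
  refine (((hgauss.integral_hasStrictDerivAt 0 0).hasDerivAt.continuousAt).const_mul
    (2 * c)).sub ?_
  simpa [ContinuousAt] using tendsto_one_sub_exp_neg_mul_sq_div_nhds_zero hc

lemma tendsto_oneSubExpDivSqPrimitive_atTop (hc : 0 < c) :
    Tendsto (oneSubExpDivSqPrimitive c) atTop (𝓝 √(π * c)) := by
  have hgauss := (intervalIntegral_tendsto_integral_Ioi 0
    (integrable_exp_neg_mul_sq hc).integrableOn tendsto_id).const_mul (2 * c)
  have hlim : 2 * c * (√(π / c) / 2) = √(π * c) := by
    rw [sqrt_div' _ hc.le, sqrt_mul pi_pos.le]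
    field_simp
    rw [sq_sqrt hc.le]
  have h := hgauss.sub (tendsto_one_sub_exp_neg_mul_sq_div_atTop hc.le)
  rwa [integral_gaussian_Ioi, sub_zero, hlim] at h

lemma integrableOn_one_sub_exp_neg_mul_sq_div_sq (hc : 0 < c) :
    IntegrableOn (fun x => (1 - exp (-c * x ^ 2)) / x ^ 2) (Ioi 0) :=
  integrableOn_Ioi_deriv_of_nonneg
    (continuousAt_oneSubExpDivSqPrimitive_zero hc.le).continuousWithinAt
    (fun _ hx => hasDerivAt_oneSubExpDivSqPrimitive (ne_of_gt hx))
    (fun x _ => div_nonneg (one_sub_exp_neg_mul_sq_nonneg hc.le x) (sq_nonneg x))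
    (tendsto_oneSubExpDivSqPrimitive_atTop hc)

lemma integral_one_sub_exp_neg_mul_sq_div_sq (hc : 0 < c) :
    ∫ x in Ioi 0, (1 - exp (-c * x ^ 2)) / x ^ 2 = √(π * c) := by
  rw [integral_Ioi_of_hasDerivAt_of_nonneg
    (continuousAt_oneSubExpDivSqPrimitive_zero hc.le).continuousWithinAt
    (fun _ hx => hasDerivAt_oneSubExpDivSqPrimitive (ne_of_gt hx))
    (fun x _ => div_nonneg (one_sub_exp_neg_mul_sq_nonneg hc.le x) (sq_nonneg x))
    (tendsto_oneSubExpDivSqPrimitive_atTop hc)]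
  simp [oneSubExpDivSqPrimitive]

noncomputable def incrementDensity (c u : ℝ) : ℝ := (√u)⁻¹ * (1 - exp (-c / u))

lemma jacobian_smul_incrementDensity_rpow_neg_two {x : ℝ} (hx : 0 < x) :
    (|(-2 : ℝ)| * x ^ ((-2 : ℝ) - 1)) • incrementDensity c (x ^ (-2 : ℝ)) =
      2 * ((1 - exp (-c * x ^ 2)) / x ^ 2) := by
  have h2 : x ^ (-2 : ℝ) = (x ^ 2)⁻¹ := by rw [rpow_neg hx.le]; norm_cast
  have h3 : x ^ ((-2 : ℝ) - 1) = (x ^ 3)⁻¹ := by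
    rw [show (-2 : ℝ) - 1 = -3 by norm_num, rpow_neg hx.le]
    norm_cast
  rw [h2, h3, incrementDensity, sqrt_inv, sqrt_sq hx.le, smul_eq_mul]
  field_simp
  norm_num

lemma integrableOn_incrementDensity (hc : 0 < c) :
    IntegrableOn (incrementDensity c) (Ioi 0) := by
  rw [← integrableOn_Ioi_comp_rpow_iff _ (by norm_num : (-2 : ℝ) ≠ 0)]
  exact IntegrableOn.congr_fun ((integrableOn_one_sub_exp_neg_mul_sq_div_sq hc).const_mul 2)
    (fun _ hx => (jacobian_smul_incrementDensity_rpow_neg_two hx).symm) measurableSet_Ioi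

lemma integral_incrementDensity (hc : 0 < c) :
    ∫ u in Ioi 0, incrementDensity c u = 2 * √(π * c) := by
  rw [← integral_comp_rpow_Ioi _ (by norm_num : (-2 : ℝ) ≠ 0),
    setIntegral_congr_fun measurableSet_Ioi
      (fun _ hx => jacobian_smul_incrementDensity_rpow_neg_two hx),
    integral_const_mul, integral_one_sub_exp_neg_mul_sq_div_sq hc]

lemma incrementDensity_mul_mul {a : ℝ} (ha : 0 < a) (u : ℝ) :
    incrementDensity (a * c) (a * u) = (√a)⁻¹ * incrementDensity c u := by
  rw [incrementDensity, incrementDensity, sqrt_mul ha.le, mul_inv, ← mul_neg,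
    mul_div_mul_left _ _ ha.ne', mul_assoc]

lemma intervalIntegral_incrementDensity_mul {a : ℝ} (ha : 0 < a) (t : ℝ) :
    ∫ r in 0..t, incrementDensity (a * c) r = √a * ∫ u in 0..t / a, incrementDensity c u := by
  have h := intervalIntegral.integral_comp_mul_left (incrementDensity (a * c)) ha.ne'
    (a := 0) (b := t / a)
  simp only [incrementDensity_mul_mul ha, intervalIntegral.integral_const_mul, mul_zero,
    mul_div_cancel₀ t ha.ne', smul_eq_mul, eq_inv_mul_iff_mul_eq₀ ha.ne'] at h
  rw [← h, ← mul_assoc]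
  congr 1
  rw [mul_inv_eq_iff_eq_mul₀ (sqrt_pos.mpr ha).ne', mul_self_sqrt ha.le]

end

/-- For every `t > 0` and `x ∈ ℝ`, `lim_{ε→0⁺} (1/ε) E[(u(t,x+ε)-u(t,x))²] = 1`, where
`E[(u(t,x+ε)-u(t,x))²] = (1/√π) ∫₀^t r^{-1/2}(1 - e^{-ε²/(4r)}) dr`. -/
theorem stmt_15 (t : ℝ) (ht : 0 < t) :
    Tendsto
      (fun ε : ℝ =>
        ε⁻¹ * ((Real.sqrt π)⁻¹ *
          ∫ r in Set.Ioc (0 : ℝ) t, (Real.sqrt r)⁻¹ * (1 - Real.exp (-ε ^ 2 / (4 * r)))))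
      (nhdsWithin 0 (Set.Ioi 0)) (nhds 1) := by
  have hT : Tendsto (fun ε : ℝ => t / ε ^ 2) (𝓝[>] 0) atTop := by
    simpa [div_eq_mul_inv, inv_pow] using
      ((tendsto_pow_atTop two_ne_zero).comp tendsto_inv_nhdsGT_zero).const_mul_atTop ht
  have hlim := (intervalIntegral_tendsto_integral_Ioi 0
    (integrableOn_incrementDensity (by norm_num : (0 : ℝ) < 4⁻¹)) hT).const_mul (√π)⁻¹
  have hquarter : 2 * √(π * 4⁻¹) = √π := by
    rw [sqrt_mul pi_pos.le, sqrt_inv, show (4 : ℝ) = 2 ^ 2 by norm_num, sqrt_sq zero_le_two]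
    ring
  rw [integral_incrementDensity (by norm_num), hquarter,
    inv_mul_cancel₀ (sqrt_pos.mpr pi_pos).ne'] at hlim
  refine hlim.congr' ?_
  filter_upwards [self_mem_nhdsWithin] with ε (hε : 0 < ε)
  have hintegrand : ∀ r, (√r)⁻¹ * (1 - exp (-ε ^ 2 / (4 * r))) =
      incrementDensity (ε ^ 2 * 4⁻¹) r := by
    intro r
    rw [incrementDensity]
    ring_nf
  simp_rw [hintegrand]
  rw [← intervalIntegral.integral_of_le ht.le,
    intervalIntegral_incrementDensity_mul (by positivity), sqrt_sq hε.le]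
  field_simp
end
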